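/- arXiv:2603.06678 — 2 statements merged into one kernel-verified Lean document; each statement's English description precedes it below -/
import Mathlib

section
/- Under the distribution Q with q(x_1, x_2, y) = p(x_1, y) p(x_2, y) / p(y), the mutual information between the sources is bounded by each source-target mutual information: I_Q(X_1; X_2) ≤ I_p(X_i; Y) for i = 1, 2. -/
/-- Shannon entropy of a distribution `q` on a finite type (natural logarithm). -/
noncomputable def entD {α : Type} [Fintype α] (q : α → ℝ) : ℝ :=
  ∑ x, -(q x * Real.log (q x))

/-- Marginal distribution of the first two coordinates. -/
def mAB {A B C : Type} [Fintype C] (q : A × B × C → ℝ) : A × B → ℝ :=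
  fun x => ∑ c, q (x.1, x.2, c)

/-- Marginal distribution of the first and third coordinates. -/
def mAC {A B C : Type} [Fintype B] (q : A × B × C → ℝ) : A × C → ℝ :=
  fun x => ∑ b, q (x.1, b, x.2)

/-- Marginal distribution of the second and third coordinates. -/
def mBC {A B C : Type} [Fintype A] (q : A × B × C → ℝ) : B × C → ℝ :=
  fun x => ∑ a, q (a, x.1, x.2)

/-- Marginal distribution of the first coordinate. -/
def mA {A B C : Type} [Fintype B] [Fintype C] (q : A × B × C → ℝ) : A → ℝ :=
  fun a => ∑ b, ∑ c, q (a, b, c)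

/-- Marginal distribution of the second coordinate. -/
def mB {A B C : Type} [Fintype A] [Fintype C] (q : A × B × C → ℝ) : B → ℝ :=
  fun b => ∑ a, ∑ c, q (a, b, c)

/-- Marginal distribution of the third coordinate (the target). -/
def mC {A B C : Type} [Fintype A] [Fintype B] (q : A × B × C → ℝ) : C → ℝ :=
  fun c => ∑ a, ∑ b, q (a, b, c)

/-- The distribution making `X₁` and `X₂` conditionally independent given `Y`,
`q(x₁,x₂,y) = p(x₁,y) p(x₂,y) / p(y)`: the maximum entropy distribution subject to the
pairwise source-target marginal constraints. -/
noncomputable def Qstar {A B C : Type} [Fintype A] [Fintype B]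
    (p : A × B × C → ℝ) : A × B × C → ℝ :=
  fun x => mAC p (x.1, x.2.2) * mBC p (x.2.1, x.2.2) / mC p x.2.2

/-- Mutual information between the two sources `I(X₁;X₂)` under `q`. -/
noncomputable def miAB {A B C : Type} [Fintype A] [Fintype B] [Fintype C]
    (q : A × B × C → ℝ) : ℝ :=
  entD (mA q) + entD (mB q) - entD (mAB q)

/-- Mutual information `I(X₁;Y)` under `q`. -/
noncomputable def miAC {A B C : Type} [Fintype A] [Fintype B] [Fintype C]
    (q : A × B × C → ℝ) : ℝ :=
  entD (mA q) + entD (mC q) - entD (mAC q)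

/-- Mutual information `I(X₂;Y)` under `q`. -/
noncomputable def miBC {A B C : Type} [Fintype A] [Fintype B] [Fintype C]
    (q : A × B × C → ℝ) : ℝ :=
  entD (mB q) + entD (mC q) - entD (mBC q)

/-- Conditional mutual information `I(X₁;X₂|Y)` under `q`. -/
noncomputable def cmiABgC {A B C : Type} [Fintype A] [Fintype B] [Fintype C]
    (q : A × B × C → ℝ) : ℝ :=
  entD (mAC q) + entD (mBC q) - entD (mC q) - entD q

/-- Conditional mutual information `I(X₁;Y|X₂)` under `q`. -/
noncomputable def cmiACgB {A B C : Type} [Fintype A] [Fintype B] [Fintype C]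
    (q : A × B × C → ℝ) : ℝ :=
  entD (mAB q) + entD (mBC q) - entD (mB q) - entD q

/-- Coinformation `I(X₁;X₂;Y) = I(X₁;X₂) − I(X₁;X₂|Y)` under `q`. -/
noncomputable def coI {A B C : Type} [Fintype A] [Fintype B] [Fintype C]
    (q : A × B × C → ℝ) : ℝ :=
  miAB q - cmiABgC q

/-!
Under `Q = Qstar p` the sources are conditionally independent given the target, so
`I_Q(X₁;X₂|Y) = 0`, while `Q` has the same pairwise source-target marginals as `p`. The chain rule
then gives
`I_Q(X₁;X₂) ≤ I_Q(X₁;X₂) + I_Q(X₁;Y|X₂) = I_Q(X₁;X₂,Y) = I_Q(X₁;Y) + I_Q(X₁;X₂|Y) = I_p(X₁;Y)`,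
and symmetrically for `X₂`.
-/

open Finset Real

lemma mul_log_le_mul_log_add_sub {q r : ℝ} (hq : 0 ≤ q) (hr : 0 ≤ r) (hqr : 0 < q → 0 < r) :
    q * log r ≤ q * log q + (r - q) := by
  rcases hq.eq_or_lt with rfl | hq
  · simpa using hr
  have hr := hqr hq
  have hlog : log (r / q) ≤ r / q - 1 := log_le_sub_one_of_pos (div_pos hr hq)
  rw [log_div hr.ne' hq.ne'] at hlog
  have := mul_le_mul_of_nonneg_left hlog hq.le
  rw [mul_sub, mul_sub, mul_div_cancel₀ r hq.ne', mul_one] at this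
  linarith

lemma sum_mul_log_le {X : Type} [Fintype X] {q r : X → ℝ} (hq : ∀ x, 0 ≤ q x)
    (hr : ∀ x, 0 ≤ r x) (hqr : ∀ x, 0 < q x → 0 < r x) :
    ∑ x, q x * log (r x) ≤ ∑ x, q x * log (q x) + (∑ x, r x - ∑ x, q x) := by
  rw [← sum_sub_distrib, ← sum_add_distrib]
  exact sum_le_sum fun x _ => mul_log_le_mul_log_add_sub (hq x) (hr x) (hqr x)

lemma entD_eq_neg_sum {X : Type} [Fintype X] (q : X → ℝ) :
    entD q = -∑ x, q x * log (q x) := by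
  simp [entD]

lemma entD_comp_equiv {X Y : Type} [Fintype X] [Fintype Y] (q : Y → ℝ) (e : X ≃ Y) :
    entD (q ∘ e) = entD q :=
  Equiv.sum_comp e fun y => -(q y * log (q y))

section Triples

variable {A B C : Type}

lemma le_mAC [Fintype B] {q : A × B × C → ℝ} (h0 : ∀ x, 0 ≤ q x) (a : A) (b : B) (c : C) :
    q (a, b, c) ≤ mAC q (a, c) :=
  single_le_sum (fun b' _ => h0 (a, b', c)) (mem_univ b)

lemma le_mBC [Fintype A] {q : A × B × C → ℝ} (h0 : ∀ x, 0 ≤ q x) (a : A) (b : B) (c : C) :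
    q (a, b, c) ≤ mBC q (b, c) :=
  single_le_sum (fun a' _ => h0 (a', b, c)) (mem_univ a)

lemma mA_eq_sum_mAC [Fintype B] [Fintype C] (q : A × B × C → ℝ) (a : A) :
    mA q a = ∑ c, mAC q (a, c) :=
  sum_comm

lemma mB_eq_sum_mBC [Fintype A] [Fintype C] (q : A × B × C → ℝ) (b : B) :
    mB q b = ∑ c, mBC q (b, c) :=
  sum_comm

variable [Fintype A] [Fintype B]

lemma mAC_le_mC {q : A × B × C → ℝ} (h0 : ∀ x, 0 ≤ q x) (a : A) (c : C) :
    mAC q (a, c) ≤ mC q c :=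
  single_le_sum (f := fun a' => mAC q (a', c))
    (fun a' _ => sum_nonneg fun b _ => h0 (a', b, c)) (mem_univ a)

lemma sum_mBC_eq_mC (q : A × B × C → ℝ) (c : C) : ∑ b, mBC q (b, c) = mC q c :=
  sum_comm

lemma Qstar_nonneg {q : A × B × C → ℝ} (h0 : ∀ x, 0 ≤ q x) (x : A × B × C) :
    0 ≤ Qstar q x :=
  div_nonneg (mul_nonneg (sum_nonneg fun _ _ => h0 _) (sum_nonneg fun _ _ => h0 _))
    (sum_nonneg fun _ _ => sum_nonneg fun _ _ => h0 _)

lemma mC_Qstar (q : A × B × C → ℝ) : mC (Qstar q) = mC q := by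
  funext c
  change ∑ a, ∑ b, mAC q (a, c) * mBC q (b, c) / mC q c = mC q c
  simp_rw [mul_div_assoc, ← mul_sum, ← sum_mul, ← sum_div, sum_mBC_eq_mC, ← mul_div_assoc]
  exact mul_self_div_self (mC q c)

lemma mAC_Qstar {q : A × B × C → ℝ} (hC : ∀ c, 0 < mC q c) : mAC (Qstar q) = mAC q := by
  funext ⟨a, c⟩
  change ∑ b, mAC q (a, c) * mBC q (b, c) / mC q c = mAC q (a, c)
  rw [← sum_div, ← mul_sum, sum_mBC_eq_mC, mul_div_cancel_right₀ _ (hC c).ne']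

lemma mBC_Qstar {q : A × B × C → ℝ} (hC : ∀ c, 0 < mC q c) : mBC (Qstar q) = mBC q := by
  funext ⟨b, c⟩
  change ∑ a, mAC q (a, c) * mBC q (b, c) / mC q c = mBC q (b, c)
  rw [← sum_div, ← sum_mul, mul_comm]
  exact mul_div_cancel_right₀ _ (hC c).ne'

lemma Qstar_Qstar {q : A × B × C → ℝ} (hC : ∀ c, 0 < mC q c) : Qstar (Qstar q) = Qstar q := by
  funext x
  change mAC (Qstar q) _ * mBC (Qstar q) _ / mC (Qstar q) _ = _
  rw [mAC_Qstar hC, mBC_Qstar hC, mC_Qstar]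
  rfl

variable [Fintype C]

lemma mA_Qstar {q : A × B × C → ℝ} (hC : ∀ c, 0 < mC q c) : mA (Qstar q) = mA q := by
  funext a
  rw [mA_eq_sum_mAC, mA_eq_sum_mAC, mAC_Qstar hC]

lemma mB_Qstar {q : A × B × C → ℝ} (hC : ∀ c, 0 < mC q c) : mB (Qstar q) = mB q := by
  funext b
  rw [mB_eq_sum_mBC, mB_eq_sum_mBC, mBC_Qstar hC]

variable (q : A × B × C → ℝ)

lemma sum_mul_comp_mAC (g : A × C → ℝ) :
    ∑ x, q x * g (x.1, x.2.2) = ∑ y, mAC q y * g y := by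
  simp only [Fintype.sum_prod_type, mAC, sum_mul]
  exact sum_congr rfl fun a _ => sum_comm

lemma sum_mul_comp_mBC (g : B × C → ℝ) :
    ∑ x, q x * g (x.2.1, x.2.2) = ∑ y, mBC q y * g y := by
  simp only [Fintype.sum_prod_type, mBC, sum_mul]
  rw [sum_comm]
  exact sum_congr rfl fun b _ => sum_comm

lemma sum_mul_comp_mC (g : C → ℝ) : ∑ x, q x * g x.2.2 = ∑ c, mC q c * g c := by
  rw [sum_mul_comp_mAC q fun y => g y.2, Fintype.sum_prod_type, sum_comm]
  simp only [mC, mAC, sum_mul]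

lemma sum_mC : ∑ c, mC q c = ∑ x, q x := by
  simpa using (sum_mul_comp_mC q fun _ => 1).symm

lemma sum_Qstar : ∑ x, Qstar q x = ∑ x, q x := by
  rw [← sum_mC, mC_Qstar, sum_mC]

lemma sum_mul_log_Qstar (h0 : ∀ x, 0 ≤ q x) :
    ∑ x, q x * log (Qstar q x) = entD (mC q) - entD (mAC q) - entD (mBC q) := by
  have hsplit : ∀ x, q x * log (Qstar q x) = q x * log (mAC q (x.1, x.2.2))
      + q x * log (mBC q (x.2.1, x.2.2)) - q x * log (mC q x.2.2) := by
    rintro ⟨a, b, c⟩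
    rcases (h0 (a, b, c)).eq_or_lt with h | h
    · simp [← h]
    have hAC := h.trans_le (le_mAC h0 a b c)
    have hBC := h.trans_le (le_mBC h0 a b c)
    have hC := hAC.trans_le (mAC_le_mC h0 a c)
    rw [Qstar, log_div (mul_pos hAC hBC).ne' hC.ne', log_mul hAC.ne' hBC.ne']
    ring
  rw [sum_congr rfl fun x _ => hsplit x, sum_sub_distrib, sum_add_distrib,
    sum_mul_comp_mAC q fun y => log (mAC q y), sum_mul_comp_mBC q fun y => log (mBC q y),
    sum_mul_comp_mC q fun c => log (mC q c), entD_eq_neg_sum (mAC q),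
    entD_eq_neg_sum (mBC q), entD_eq_neg_sum (mC q)]
  ring

variable {q}

-- `cmiABgC q` is the relative entropy of `q` with respect to `Qstar q`.
lemma cmiABgC_nonneg (h0 : ∀ x, 0 ≤ q x) : 0 ≤ cmiABgC q := by
  have hpos : ∀ x, 0 < q x → 0 < Qstar q x := by
    rintro ⟨a, b, c⟩ h
    have hAC := h.trans_le (le_mAC h0 a b c)
    exact div_pos (mul_pos hAC (h.trans_le (le_mBC h0 a b c))) (hAC.trans_le (mAC_le_mC h0 a c))
  have hgibbs := sum_mul_log_le h0 (Qstar_nonneg h0) hpos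
  rw [sum_mul_log_Qstar q h0, sum_Qstar, sub_self, add_zero] at hgibbs
  rw [cmiABgC, entD_eq_neg_sum q]
  linarith

lemma cmiABgC_Qstar (h0 : ∀ x, 0 ≤ q x) (hC : ∀ c, 0 < mC q c) : cmiABgC (Qstar q) = 0 := by
  have h := sum_mul_log_Qstar (Qstar q) (Qstar_nonneg h0)
  rw [Qstar_Qstar hC] at h
  rw [cmiABgC, entD_eq_neg_sum (Qstar q), h]
  ring

lemma cmiACgB_nonneg (h0 : ∀ x, 0 ≤ q x) : 0 ≤ cmiACgB q := by
  let q' : A × C × B → ℝ := fun x => q (x.1, x.2.2, x.2.1)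
  have hq' : entD q' = entD q := entD_comp_equiv q ((Equiv.refl A).prodCongr (Equiv.prodComm C B))
  have hBC : entD (mBC q') = entD (mBC q) := entD_comp_equiv (mBC q) (Equiv.prodComm C B)
  have h := cmiABgC_nonneg (q := q') fun _ => h0 _
  rwa [cmiABgC, hq', hBC] at h

lemma entD_add_entD_mA_le (h0 : ∀ x, 0 ≤ q x) :
    entD q + entD (mA q) ≤ entD (mAB q) + entD (mAC q) := by
  let q' : B × C × A → ℝ := fun x => q (x.2.2, x.1, x.2.1)
  have hq' : entD q' = entD q :=
    entD_comp_equiv q ((Equiv.prodAssoc B C A).symm.trans (Equiv.prodComm (B × C) A))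
  have hBA : entD (mAC q') = entD (mAB q) := entD_comp_equiv (mAB q) (Equiv.prodComm B A)
  have hCA : entD (mBC q') = entD (mAC q) := entD_comp_equiv (mAC q) (Equiv.prodComm C A)
  have h := cmiABgC_nonneg (q := q') fun _ => h0 _
  rw [cmiABgC, hq', hBA, hCA] at h
  change 0 ≤ entD (mAB q) + entD (mAC q) - entD (mA q) - entD q at h
  linarith

end Triples

theorem source_mutual_information_under_Qstar_le_marginal_mutual_information_general
    {A B C : Type} [Fintype A] [Fintype B] [Fintype C]
    (p : A × B × C → ℝ) (hpos : ∀ x, 0 ≤ p x)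
    (hC : ∀ c, 0 < mC p c) :
    miAB (Qstar p) ≤ miAC p ∧ miAB (Qstar p) ≤ miBC p := by
  have hindep := cmiABgC_Qstar hpos hC
  have hACgB := cmiACgB_nonneg (Qstar_nonneg hpos)
  have hBCgA := entD_add_entD_mA_le (Qstar_nonneg hpos)
  simp only [miAB, miAC, miBC, cmiABgC, cmiACgB, mA_Qstar hC, mB_Qstar hC, mC_Qstar,
    mAC_Qstar hC, mBC_Qstar hC] at *
  constructor <;> linarith

/-- Under the distribution `Q` with
`q(x₁,x₂,y) = p(x₁,y)p(x₂,y)/p(y)`, the mutual information between the sources is bounded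
by each source-target mutual information of `p`:
`I_Q(X₁;X₂) ≤ I_p(Xᵢ;Y)` for `i = 1, 2`. -/
theorem source_mutual_information_under_Qstar_le_marginal_mutual_information
    {A B C : Type} [Fintype A] [Fintype B] [Fintype C]
    (p : A × B × C → ℝ) (hpos : ∀ x, 0 ≤ p x) (hsum : ∑ x, p x = 1)
    (hC : ∀ c, 0 < mC p c) :
    miAB (Qstar p) ≤ miAC p ∧ miAB (Qstar p) ≤ miBC p :=
  source_mutual_information_under_Qstar_le_marginal_mutual_information_general p hpos hC
end

section
/- The Rescaled Redundancy I_RR satisfies Global Positivity and is bounded above by the minimum marginal mutual information: 0 ≤ I_RR(X_1, X_2; Y) ≤ min(I(X_1; Y), I(X_2; Y)). -/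
/-!
`I_RR = R_min + I_s (R_MMI − R_min)` is a convex combination of `R_min` and `R_MMI` with weight
`I_s ∈ [0, 1]`, so it lies in `[0, R_MMI]` once `0 ≤ R_min ≤ R_MMI`. These are Shannon
inequalities: `0 ≤ I(X;Y) ≤ H(X)` bounds `I_s`, and `I(X₂;Y) ≤ I(X₁,X₂;Y)` bounds the
coinformation by each `I(Xᵢ;Y)`. Both follow from strong subadditivity
`H(X₁,X₂,Y) + H(X₂) ≤ H(X₁,X₂) + H(X₂,Y)`, which is Gibbs' inequality comparing the law of
`(X₁,X₂,Y)` with the Markov chain `X₁ - X₂ - Y` that has the same pair marginals.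
-/

/-- A (finite, discrete) random variable on the finite sample space `Ω`,
with values encoded as natural numbers. -/
abbrev RV (Ω : Type) := Ω → ℕ

/-- `p` is a probability mass function on `Ω`. -/
def IsPMF {Ω : Type} [Fintype Ω] (p : Ω → ℝ) : Prop :=
  (∀ ω, 0 ≤ p ω) ∧ ∑ ω, p ω = 1

/-- Probability that the random variable `X` takes the value `v`. -/
noncomputable def prob {Ω α : Type} [Fintype Ω] [DecidableEq α]
    (p : Ω → ℝ) (X : Ω → α) (v : α) : ℝ :=
  ∑ ω ∈ Finset.univ.filter (fun ω => X ω = v), p ω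

/-- Shannon entropy of the random variable `X` under the distribution `p`. -/
noncomputable def ent {Ω α : Type} [Fintype Ω] [DecidableEq α]
    (p : Ω → ℝ) (X : Ω → α) : ℝ :=
  ∑ v ∈ Finset.image X Finset.univ, -(prob p X v * Real.log (prob p X v))

/-- Shannon mutual information `I(X;Y)` under the distribution `p`. -/
noncomputable def MI {Ω α β : Type} [Fintype Ω] [DecidableEq α] [DecidableEq β]
    (p : Ω → ℝ) (X : Ω → α) (Y : Ω → β) : ℝ :=
  ent p X + ent p Y - ent p (fun ω => (X ω, Y ω))

/-- The joint random variable `(X,Y)`, encoded back into `ℕ` via the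
injective pairing function `Nat.pair`. -/
def joint {Ω : Type} (X Y : RV Ω) : RV Ω := fun ω => Nat.pair (X ω) (Y ω)

/-- Coinformation `I(X₁;X₂;Y) = I(X₁;Y) + I(X₂;Y) − I(X₁,X₂;Y)`. -/
noncomputable def coi {Ω : Type} [Fintype Ω] (p : Ω → ℝ) (X₁ X₂ Y : RV Ω) : ℝ :=
  MI p X₁ Y + MI p X₂ Y - MI p (joint X₁ X₂) Y

/-- `R_min = max(0, I(X₁;X₂;Y))`. -/
noncomputable def Rmin {Ω : Type} [Fintype Ω] (p : Ω → ℝ) (X₁ X₂ Y : RV Ω) : ℝ :=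
  max 0 (coi p X₁ X₂ Y)

/-- `R_MMI = min(I(X₁;Y), I(X₂;Y))`. -/
noncomputable def RMMI {Ω : Type} [Fintype Ω] (p : Ω → ℝ) (X₁ X₂ Y : RV Ω) : ℝ :=
  min (MI p X₁ Y) (MI p X₂ Y)

/-- Normalised source dependency `I_s = I(X₁;X₂) / min(H(X₁),H(X₂))`. -/
noncomputable def Isrc {Ω : Type} [Fintype Ω] (p : Ω → ℝ) (X₁ X₂ : RV Ω) : ℝ :=
  MI p X₁ X₂ / min (ent p X₁) (ent p X₂)

/-- The Rescaled Redundancy `I_RR = R_min + I_s (R_MMI − R_min)`. -/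
noncomputable def IRR {Ω : Type} [Fintype Ω] (p : Ω → ℝ) (X₁ X₂ Y : RV Ω) : ℝ :=
  Rmin p X₁ X₂ Y + Isrc p X₁ X₂ * (RMMI p X₁ X₂ Y - Rmin p X₁ X₂ Y)

section Entropy

variable {Ω α β γ : Type} [Fintype Ω] [DecidableEq α] [DecidableEq β] [DecidableEq γ]
  {p : Ω → ℝ}

lemma prob_nonneg (hp : ∀ ω, 0 ≤ p ω) (X : Ω → α) (v : α) : 0 ≤ prob p X v :=
  Finset.sum_nonneg fun ω _ => hp ω

lemma le_prob (hp : ∀ ω, 0 ≤ p ω) (X : Ω → α) (ω : Ω) : p ω ≤ prob p X (X ω) :=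
  Finset.single_le_sum (fun ω' _ => hp ω') (by simp)

lemma prob_pos (hp : ∀ ω, 0 ≤ p ω) (X : Ω → α) {ω : Ω} (hω : 0 < p ω) :
    0 < prob p X (X ω) :=
  hω.trans_le (le_prob hp X ω)

lemma sum_prob (hp : IsPMF p) (X : Ω → α) :
    ∑ v ∈ Finset.image X Finset.univ, prob p X v = 1 := by
  rw [← hp.2]
  exact Finset.sum_fiberwise_of_maps_to (fun ω _ => Finset.mem_image_of_mem X (Finset.mem_univ ω)) p

lemma sum_prob_pair_left (X : Ω → α) (Y : Ω → β) (b : β) :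
    ∑ a ∈ Finset.image X Finset.univ, prob p (fun ω => (X ω, Y ω)) (a, b) = prob p Y b := by
  rw [prob, ← Finset.sum_fiberwise_of_maps_to (g := X) (t := Finset.image X Finset.univ)
    (fun ω _ => Finset.mem_image_of_mem X (Finset.mem_univ ω)) p]
  refine Finset.sum_congr rfl fun a _ => Finset.sum_congr ?_ fun _ _ => rfl
  ext ω
  simp [Prod.ext_iff, and_comm]

lemma sum_prob_pair_right (X : Ω → α) (Y : Ω → β) (a : α) :
    ∑ b ∈ Finset.image Y Finset.univ, prob p (fun ω => (X ω, Y ω)) (a, b) = prob p X a := by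
  rw [prob, ← Finset.sum_fiberwise_of_maps_to (g := Y) (t := Finset.image Y Finset.univ)
    (fun ω _ => Finset.mem_image_of_mem Y (Finset.mem_univ ω)) p]
  refine Finset.sum_congr rfl fun b _ => Finset.sum_congr ?_ fun _ _ => rfl
  ext ω
  simp [Prod.ext_iff]

lemma ent_eq_sum (X : Ω → α) : ent p X = ∑ ω, -(p ω * Real.log (prob p X (X ω))) := by
  rw [ent, ← Finset.sum_fiberwise_of_maps_to (g := X) (t := Finset.image X Finset.univ)
    (fun ω _ => Finset.mem_image_of_mem X (Finset.mem_univ ω))]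
  refine Finset.sum_congr rfl fun v _ => ?_
  rw [prob, Finset.sum_mul, ← Finset.sum_neg_distrib]
  exact Finset.sum_congr rfl fun ω hω => by rw [(Finset.mem_filter.mp hω).2]; rfl

lemma sum_mul_div_prob_le (hp : ∀ ω, 0 ≤ p ω) (Z : Ω → α) {g : α → ℝ} (hg : ∀ v, 0 ≤ g v) :
    ∑ ω, p ω * (g (Z ω) / prob p Z (Z ω)) ≤ ∑ v ∈ Finset.image Z Finset.univ, g v := by
  rw [← Finset.sum_fiberwise_of_maps_to (g := Z) (t := Finset.image Z Finset.univ)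
    (fun ω _ => Finset.mem_image_of_mem Z (Finset.mem_univ ω))]
  refine Finset.sum_le_sum fun v _ => ?_
  have hfiber : ∑ ω ∈ Finset.univ.filter (fun ω => Z ω = v), p ω * (g (Z ω) / prob p Z (Z ω))
      = prob p Z v * (g v / prob p Z v) :=
    (Finset.sum_congr rfl fun ω hω => by rw [(Finset.mem_filter.mp hω).2]).trans
      (Finset.sum_mul _ _ _).symm
  rcases (prob_nonneg hp Z v).eq_or_lt with h0 | h0
  · simpa [hfiber, ← h0] using hg v
  · rw [hfiber, mul_div_cancel₀ _ h0.ne']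

lemma ent_congr {X : Ω → α} {X' : Ω → β} (h : ∀ ω₁ ω₂, X ω₁ = X ω₂ ↔ X' ω₁ = X' ω₂) :
    ent p X = ent p X' := by
  have hprob : ∀ ω, prob p X (X ω) = prob p X' (X' ω) := fun ω => by
    unfold prob
    congr 1
    ext ω'
    simp [h ω' ω]
  simp only [ent_eq_sum, hprob]

lemma ent_pair_comm (X : Ω → α) (Y : Ω → β) :
    ent p (fun ω => (X ω, Y ω)) = ent p (fun ω => (Y ω, X ω)) :=
  ent_congr fun _ _ => by simp [Prod.ext_iff, and_comm]

lemma ent_const (hp : IsPMF p) (c : α) : ent p (fun _ => c) = 0 := by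
  have hprob : prob p (fun _ => c) c = 1 := by simp [prob, hp.2]
  simp [ent_eq_sum, hprob]

lemma prob_pair_le_prob_left (hp : ∀ ω, 0 ≤ p ω) (X : Ω → α) (Y : Ω → β) (a : α) (b : β) :
    prob p (fun ω => (X ω, Y ω)) (a, b) ≤ prob p X a :=
  Finset.sum_le_sum_of_subset_of_nonneg
    (fun ω hω => by simp_all [Finset.mem_filter, Prod.ext_iff]) fun ω _ _ => hp ω

lemma ent_le_ent_pair (hp : ∀ ω, 0 ≤ p ω) (X : Ω → α) (Y : Ω → β) :
    ent p X ≤ ent p (fun ω => (X ω, Y ω)) := by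
  rw [ent_eq_sum, ent_eq_sum]
  refine Finset.sum_le_sum fun ω _ => neg_le_neg ?_
  rcases (hp ω).eq_or_lt with h0 | h0
  · simp [← h0]
  · exact mul_le_mul_of_nonneg_left
      (Real.log_le_log (prob_pos hp _ h0) (prob_pair_le_prob_left hp X Y _ _)) h0.le

lemma gibbs_inequality (hp : IsPMF p) (f : Ω → ℝ) (hf : ∀ ω, 0 < p ω → 0 < f ω)
    (hs : ∑ ω, p ω * f ω ≤ 1) : ∑ ω, p ω * Real.log (f ω) ≤ 0 :=
  calc ∑ ω, p ω * Real.log (f ω)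
      ≤ ∑ ω, p ω * (f ω - 1) := Finset.sum_le_sum fun ω _ => by
        rcases (hp.1 ω).eq_or_lt with h0 | h0
        · simp [← h0]
        · exact mul_le_mul_of_nonneg_left (Real.log_le_sub_one_of_pos (hf ω h0)) h0.le
    _ = ∑ ω, p ω * f ω - 1 := by simp [mul_sub, Finset.sum_sub_distrib, hp.2]
    _ ≤ 0 := by linarith

noncomputable def markovWeight (p : Ω → ℝ) (X₁ : Ω → α) (X₂ : Ω → β) (Y : Ω → γ)
    (t : (α × β) × γ) : ℝ :=
  prob p (fun ω => (X₁ ω, X₂ ω)) t.1 * prob p (fun ω => (X₂ ω, Y ω)) (t.1.2, t.2)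
    / prob p X₂ t.1.2

lemma markovWeight_nonneg (hp : ∀ ω, 0 ≤ p ω) (X₁ : Ω → α) (X₂ : Ω → β) (Y : Ω → γ)
    (t : (α × β) × γ) : 0 ≤ markovWeight p X₁ X₂ Y t :=
  div_nonneg (mul_nonneg (prob_nonneg hp _ _) (prob_nonneg hp _ _)) (prob_nonneg hp _ _)

lemma sum_markovWeight_le_one (hp : IsPMF p) (X₁ : Ω → α) (X₂ : Ω → β) (Y : Ω → γ) :
    ∑ t ∈ Finset.image (fun ω => ((X₁ ω, X₂ ω), Y ω)) Finset.univ,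
      markovWeight p X₁ X₂ Y t ≤ 1 := by
  have hsub : Finset.image (fun ω => ((X₁ ω, X₂ ω), Y ω)) Finset.univ ⊆
      (Finset.image X₁ Finset.univ ×ˢ Finset.image X₂ Finset.univ) ×ˢ Finset.image Y Finset.univ :=
    fun t ht => by
      obtain ⟨ω, -, rfl⟩ := Finset.mem_image.mp ht
      simp
  calc _ ≤ _ :=
        Finset.sum_le_sum_of_subset_of_nonneg hsub fun t _ _ => markovWeight_nonneg hp.1 _ _ _ t
    _ = ∑ b ∈ Finset.image X₂ Finset.univ, prob p X₂ b := by
        rw [Finset.sum_product, Finset.sum_product, Finset.sum_comm]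
        refine Finset.sum_congr rfl fun b _ => ?_
        simp only [markovWeight, ← Finset.sum_div, ← Finset.sum_mul_sum, sum_prob_pair_left,
          sum_prob_pair_right, mul_self_div_self]
    _ = 1 := sum_prob hp X₂

lemma ent_triple_add_ent_le (hp : IsPMF p) (X₁ : Ω → α) (X₂ : Ω → β) (Y : Ω → γ) :
    ent p (fun ω => ((X₁ ω, X₂ ω), Y ω)) + ent p X₂
      ≤ ent p (fun ω => (X₁ ω, X₂ ω)) + ent p (fun ω => (X₂ ω, Y ω)) := by
  set T := fun ω => ((X₁ ω, X₂ ω), Y ω)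
  set f := fun ω => markovWeight p X₁ X₂ Y (T ω) / prob p T (T ω)
  have hf : ∀ ω, 0 < p ω → 0 < f ω := fun ω hω => by
    simp only [f, markovWeight]
    have := prob_pos hp.1 (fun ω => (X₁ ω, X₂ ω)) hω
    have := prob_pos hp.1 (fun ω => (X₂ ω, Y ω)) hω
    have := prob_pos hp.1 X₂ hω
    have := prob_pos hp.1 T hω
    positivity
  have hgibbs := gibbs_inequality hp f hf <| (sum_mul_div_prob_le hp.1 T
    (markovWeight_nonneg hp.1 X₁ X₂ Y)).trans (sum_markovWeight_le_one hp X₁ X₂ Y)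
  have hlog : ∑ ω, p ω * Real.log (f ω) = ent p T + ent p X₂
      - ent p (fun ω => (X₁ ω, X₂ ω)) - ent p (fun ω => (X₂ ω, Y ω)) := by
    simp only [ent_eq_sum, ← Finset.sum_add_distrib, ← Finset.sum_sub_distrib]
    refine Finset.sum_congr rfl fun ω _ => ?_
    rcases (hp.1 ω).eq_or_lt with h0 | h0
    · simp [← h0]
    · have h12 := (prob_pos hp.1 (fun ω => (X₁ ω, X₂ ω)) h0).ne'
      have h2Y := (prob_pos hp.1 (fun ω => (X₂ ω, Y ω)) h0).ne'
      have h2 := (prob_pos hp.1 X₂ h0).ne'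
      have hT := (prob_pos hp.1 T h0).ne'
      simp only [f, markovWeight]
      rw [Real.log_div (by positivity) hT, Real.log_div (by positivity) h2, Real.log_mul h12 h2Y]
      ring
  linarith

lemma MI_comm (X : Ω → α) (Y : Ω → β) : MI p X Y = MI p Y X := by
  rw [MI, MI, ent_pair_comm]
  ring

lemma MI_congr_left {X : Ω → α} {X' : Ω → β} (Y : Ω → γ)
    (h : ∀ ω₁ ω₂, X ω₁ = X ω₂ ↔ X' ω₁ = X' ω₂) : MI p X Y = MI p X' Y := by
  rw [MI, MI, ent_congr h, ent_congr (X := fun ω => (X ω, Y ω)) (X' := fun ω => (X' ω, Y ω))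
    fun ω₁ ω₂ => by simp [Prod.ext_iff, h]]

lemma MI_const_left (hp : IsPMF p) (c : α) (Y : Ω → β) : MI p (fun _ => c) Y = 0 := by
  rw [MI, ent_const hp, ent_congr (X := fun ω => (c, Y ω)) (X' := Y) fun _ _ => by simp]
  ring

lemma MI_le_MI_pair_right (hp : IsPMF p) (X₁ : Ω → α) (X₂ : Ω → β) (Y : Ω → γ) :
    MI p X₂ Y ≤ MI p (fun ω => (X₁ ω, X₂ ω)) Y := by
  have := ent_triple_add_ent_le hp X₁ X₂ Y
  rw [MI, MI]
  linarith

lemma MI_le_MI_pair_left (hp : IsPMF p) (X₁ : Ω → α) (X₂ : Ω → β) (Y : Ω → γ) :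
    MI p X₁ Y ≤ MI p (fun ω => (X₁ ω, X₂ ω)) Y :=
  (MI_le_MI_pair_right hp X₂ X₁ Y).trans_eq
    (MI_congr_left Y fun _ _ => by simp [Prod.ext_iff, and_comm])

-- Subadditivity is strong subadditivity with a constant middle variable.
lemma MI_nonneg (hp : IsPMF p) (X : Ω → α) (Y : Ω → β) : 0 ≤ MI p X Y := by
  have h := MI_le_MI_pair_right hp X (fun _ => ()) Y
  rwa [MI_const_left hp, MI_congr_left (X' := X) Y fun _ _ => by simp] at h

lemma MI_le_ent_right (hp : ∀ ω, 0 ≤ p ω) (X : Ω → α) (Y : Ω → β) : MI p X Y ≤ ent p Y := by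
  have := ent_le_ent_pair hp X Y
  rw [MI]
  linarith

lemma MI_le_ent_left (hp : ∀ ω, 0 ≤ p ω) (X : Ω → α) (Y : Ω → β) : MI p X Y ≤ ent p X :=
  MI_comm X Y ▸ MI_le_ent_right hp Y X

lemma ent_nonneg (hp : IsPMF p) (X : Ω → α) : 0 ≤ ent p X :=
  (MI_nonneg hp X X).trans (MI_le_ent_left hp.1 X X)

end Entropy

section Redundancy

variable {Ω : Type} [Fintype Ω] {p : Ω → ℝ}

lemma MI_joint_left (X₁ X₂ Y : RV Ω) :
    MI p (joint X₁ X₂) Y = MI p (fun ω => (X₁ ω, X₂ ω)) Y :=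
  MI_congr_left Y fun _ _ => by simp [joint, Nat.pair_eq_pair, Prod.ext_iff]

lemma coi_le_MI_left (hp : IsPMF p) (X₁ X₂ Y : RV Ω) : coi p X₁ X₂ Y ≤ MI p X₁ Y := by
  have := MI_le_MI_pair_right hp X₁ X₂ Y
  rw [coi, MI_joint_left]
  linarith

lemma coi_le_MI_right (hp : IsPMF p) (X₁ X₂ Y : RV Ω) : coi p X₁ X₂ Y ≤ MI p X₂ Y := by
  have := MI_le_MI_pair_left hp X₁ X₂ Y
  rw [coi, MI_joint_left]
  linarith

lemma Rmin_le_RMMI (hp : IsPMF p) (X₁ X₂ Y : RV Ω) : Rmin p X₁ X₂ Y ≤ RMMI p X₁ X₂ Y :=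
  max_le (le_min (MI_nonneg hp X₁ Y) (MI_nonneg hp X₂ Y))
    (le_min (coi_le_MI_left hp X₁ X₂ Y) (coi_le_MI_right hp X₁ X₂ Y))

lemma Isrc_nonneg (hp : IsPMF p) (X₁ X₂ : RV Ω) : 0 ≤ Isrc p X₁ X₂ :=
  div_nonneg (MI_nonneg hp X₁ X₂) (le_min (ent_nonneg hp X₁) (ent_nonneg hp X₂))

lemma Isrc_le_one (hp : IsPMF p) (X₁ X₂ : RV Ω) : Isrc p X₁ X₂ ≤ 1 :=
  div_le_one_of_le₀ (le_min (MI_le_ent_left hp.1 X₁ X₂) (MI_le_ent_right hp.1 X₁ X₂))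
    (le_min (ent_nonneg hp X₁) (ent_nonneg hp X₂))

end Redundancy

theorem rescaled_redundancy_global_positivity_and_upper_bound_general
    {Ω : Type} [Fintype Ω] (p : Ω → ℝ) (hp : IsPMF p)
    (X₁ X₂ Y : RV Ω) :
    0 ≤ IRR p X₁ X₂ Y ∧ IRR p X₁ X₂ Y ≤ min (MI p X₁ Y) (MI p X₂ Y) := by
  have hRmin : 0 ≤ Rmin p X₁ X₂ Y := le_max_left _ _
  have hgap : 0 ≤ RMMI p X₁ X₂ Y - Rmin p X₁ X₂ Y := sub_nonneg.mpr (Rmin_le_RMMI hp X₁ X₂ Y)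
  refine ⟨add_nonneg hRmin (mul_nonneg (Isrc_nonneg hp X₁ X₂) hgap), ?_⟩
  calc IRR p X₁ X₂ Y ≤ Rmin p X₁ X₂ Y + (RMMI p X₁ X₂ Y - Rmin p X₁ X₂ Y) :=
        add_le_add_right (mul_le_of_le_one_left hgap (Isrc_le_one hp X₁ X₂)) _
    _ = min (MI p X₁ Y) (MI p X₂ Y) := add_sub_cancel _ _

/-- The Rescaled Redundancy satisfies Global Positivity and is bounded
above by the minimum marginal mutual information:
`0 ≤ I_RR(X₁,X₂;Y) ≤ min(I(X₁;Y), I(X₂;Y))`. -/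
theorem rescaled_redundancy_global_positivity_and_upper_bound
    {Ω : Type} [Fintype Ω] (p : Ω → ℝ) (hp : IsPMF p)
    (X₁ X₂ Y : RV Ω) (h₁ : 0 < ent p X₁) (h₂ : 0 < ent p X₂) :
    0 ≤ IRR p X₁ X₂ Y ∧ IRR p X₁ X₂ Y ≤ min (MI p X₁ Y) (MI p X₂ Y) :=
  rescaled_redundancy_global_positivity_and_upper_bound_general p hp X₁ X₂ Y
end
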